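/- Let Ω = ℝⁿ and let the kernel be translation invariant: K(x,y) = J(x − y) where J : ℝⁿ → ℝ is nonnegative, integrable, and normalized so that ∫_{ℝⁿ} J = 1. Let ρ be a recognition function satisfying the coordination condition, let u₀ : ℝⁿ → ℝ be bounded and Lipschitz with constant L₀, and let u be a solution of the initial value problem u_t = g[u] with initial datum u₀ on ℝⁿ × [0,T]. Let L_ρ be a Lipschitz constant for ρ' on [−2 sup|u₀|, 2 sup|u₀|]. Then for all x, h ∈ ℝⁿ and t ∈ [0,T], |u(x + h, t) − u(x, t)| ≤ |h| L₀ e^{2 L_ρ t}; i.e., u(·,t) is Lipschitz with constant L₀ e^{2 L_ρ t}, independent of the shape of J. -/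

import Mathlib

/-!
Maximum principle first: where `u(·,t)` is close to its supremum, the coordination condition
makes the integrand `ρ'(u(x) - u(y))` nonpositive up to an error controlled by the Lipschitz
constant of `ρ'` near `0`, so `sup u(·,t)` cannot increase; applied to `-u` (a solution for
`z ↦ -ρ'(-z)`) this gives `|u| ≤ sup |u₀|`, so `ρ'` is only ever evaluated on `[-2M, 2M]`.

Since the kernel is translation invariant, `u(· + h, ·)` is again a solution. Because `∫ J = 1`,
the nonlocality is `2 L_ρ`-Lipschitz for the sup norm, so `sup_x |u(x + h, t) - u(x, t)|` obeys
Grönwall's inequality. Suprema need not be differentiable in `t`, so Grönwall is used in a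
discrete form: a one-step bound `f t₂ ≤ (1 + K (t₂ - t₁)) f t₁ + c (t₂ - t₁)²`, iterated over
finer and finer uniform partitions.
-/

open MeasureTheory Set Filter Topology

theorem le_pow_mul_add_mul_of_forall_le {a c : ℝ} (ha : 1 ≤ a) (hc : 0 ≤ c) {x : ℕ → ℝ}
    {N : ℕ} (hx : ∀ k < N, x (k + 1) ≤ a * x k + c) : x N ≤ a ^ N * (x 0 + N * c) := by
  induction N with
  | zero => simp
  | succ m ih =>
    have ih := ih fun k hk => hx k (by omega)
    have hc' : c ≤ a ^ (m + 1) * c := le_mul_of_one_le_left hc (one_le_pow₀ ha)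
    calc x (m + 1) ≤ a * x m + c := hx m (by omega)
      _ ≤ a * (a ^ m * (x 0 + m * c)) + c := by gcongr
      _ ≤ a ^ (m + 1) * (x 0 + (m + 1 : ℕ) * c) := by
        push_cast; rw [pow_succ]; linear_combination hc'

theorem le_exp_mul_mul_of_forall_le_one_add_mul {f : ℝ → ℝ} {K c δ T t : ℝ} (hK : 0 ≤ K)
    (hc : 0 ≤ c) (hδ : 0 < δ) (hf₀ : 0 ≤ f 0)
    (hstep : ∀ t₁ t₂, 0 ≤ t₁ → t₁ ≤ t₂ → t₂ ≤ T → t₂ - t₁ ≤ δ →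
      f t₂ ≤ (1 + K * (t₂ - t₁)) * f t₁ + c * (t₂ - t₁) ^ 2)
    (ht : t ∈ Icc 0 T) : f t ≤ Real.exp (K * t) * f 0 := by
  have hpartition : ∀ᶠ N : ℕ in atTop, f t ≤ Real.exp (K * t) * (f 0 + c * t ^ 2 / N) := by
    filter_upwards [eventually_gt_atTop 0, eventually_ge_atTop ⌈t / δ⌉₊] with N hN₀ hNδ
    have hN : (0 : ℝ) < N := by exact_mod_cast hN₀
    set Δ := t / N with hΔ
    have hΔ₀ : 0 ≤ Δ := div_nonneg ht.1 hN.le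
    have hΔδ : Δ ≤ δ := by
      rw [hΔ, div_le_iff₀ hN, mul_comm, ← div_le_iff₀ hδ]
      exact (Nat.le_ceil _).trans (by exact_mod_cast hNδ)
    have hNΔ : N * Δ = t := mul_div_cancel₀ _ hN.ne'
    have hchain := le_pow_mul_add_mul_of_forall_le (x := fun k => f (k * Δ))
      (le_add_of_nonneg_right (mul_nonneg hK hΔ₀)) (mul_nonneg hc (sq_nonneg Δ)) (N := N)
      fun k hk => by
        have hk' : (k + 1 : ℝ) ≤ N := by exact_mod_cast hk
        have h := hstep (k * Δ) ((k + 1) * Δ) (by positivity) (by nlinarith)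
          (by nlinarith [ht.2]) (by nlinarith)
        simpa [add_mul] using h
    have hpow : (1 + K * Δ) ^ N ≤ Real.exp (K * t) := by
      calc (1 + K * Δ) ^ N ≤ Real.exp (K * Δ) ^ N := by
            gcongr
            linarith [Real.add_one_le_exp (K * Δ)]
        _ = Real.exp (K * t) := by rw [← Real.exp_nat_mul, ← hNΔ]; ring_nf
    have hsum : (N : ℝ) * (c * Δ ^ 2) = c * t ^ 2 / N := by
      rw [hΔ]; field_simp
    simp only [Nat.cast_zero, zero_mul, hNΔ] at hchain
    calc f t ≤ (1 + K * Δ) ^ N * (f 0 + N * (c * Δ ^ 2)) := hchain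
      _ ≤ Real.exp (K * t) * (f 0 + c * t ^ 2 / N) := by
        rw [hsum]; gcongr
  have hlim : Tendsto (fun N : ℕ => Real.exp (K * t) * (f 0 + c * t ^ 2 / N)) atTop
      (𝓝 (Real.exp (K * t) * f 0)) := by
    simpa using ((tendsto_const_div_atTop_nhds_zero_nat (c * t ^ 2)).const_add (f 0)).const_mul
      (Real.exp (K * t))
  exact ge_of_tendsto hlim hpartition

theorem abs_sub_le_two_mul_of_abs_le {a b B : ℝ} (ha : |a| ≤ B) (hb : |b| ≤ B) :
    |a - b| ≤ 2 * B := by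
  linarith [abs_sub a b]

theorem Continuous.exists_abs_le_of_abs_le {f : ℝ → ℝ} (hf : Continuous f) (R : ℝ) :
    ∃ C, ∀ z, |z| ≤ R → |f z| ≤ C := by
  obtain ⟨C, hC⟩ :=
    (isCompact_Icc (a := -R) (b := R)).exists_bound_of_continuousOn hf.continuousOn
  exact ⟨C, fun z hz => hC z (abs_le.1 hz)⟩

theorem locallyLipschitz_of_forall_abs_sub_le {f : ℝ → ℝ}
    (hf : ∀ R, 0 < R → ∃ L, ∀ a b, |a| ≤ R → |b| ≤ R → |f a - f b| ≤ L * |a - b|) :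
    LocallyLipschitz f := by
  intro x
  obtain ⟨L, hL⟩ := hf (|x| + 1) (by positivity)
  refine ⟨L.toNNReal, Icc (-(|x| + 1)) (|x| + 1), Icc_mem_nhds ?_ ?_,
    LipschitzOnWith.of_dist_le' fun a ha b hb => hL a b (abs_le.2 ha) (abs_le.2 hb)⟩ <;>
  linarith [neg_abs_le x, le_abs_self x]

theorem LocallyLipschitz.neg_comp_neg {f : ℝ → ℝ} (hf : LocallyLipschitz f) :
    LocallyLipschitz fun z => -f (-z) :=
  locallyLipschitz_neg_iff.2 <| hf.comp <|
    (LipschitzWith.of_dist_le_mul (K := 1) fun x y => by simp [dist_neg_neg]).locallyLipschitz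

theorem le_mul_sub_of_coordination {ρ' : ℝ → ℝ} {R L a b B : ℝ}
    (hcoord : ∀ z, 0 ≤ z → ρ' z ≤ 0) (hlin : ∀ z, -R ≤ z → z ≤ 0 → ρ' z ≤ L * -z)
    (hL : 0 ≤ L) (ha : a ≤ B) (hb : b ≤ B) (hab : -R ≤ a - b) : ρ' (a - b) ≤ L * (B - a) := by
  rcases le_total 0 (a - b) with h | h
  · exact (hcoord _ h).trans (mul_nonneg hL (by linarith))
  · exact (hlin _ hab h).trans (mul_le_mul_of_nonneg_left (by linarith) hL)

theorem abs_intervalIntegral_le_mul {f : ℝ → ℝ} {a b C : ℝ} (hab : a ≤ b)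
    (hf : ∀ s ∈ Icc a b, |f s| ≤ C) : |∫ s in a..b, f s| ≤ C * (b - a) := by
  have h := intervalIntegral.norm_integral_le_of_norm_le_const (C := C) (f := f) fun s hs =>
    hf s (Ioc_subset_Icc_self (uIoc_of_le hab ▸ hs))
  rwa [Real.norm_eq_abs, abs_of_nonneg (sub_nonneg.2 hab)] at h


section

variable {E : Type*} [AddCommGroup E] [MeasurableSpace E]

structure IsProbabilityDensity (μ : Measure E) (J : E → ℝ) : Prop where
  nonneg : ∀ z, 0 ≤ J z
  integrable : Integrable J μ
  integral_eq_one : ∫ z, J z ∂μ = 1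

namespace IsProbabilityDensity

variable [MeasurableAdd E] [MeasurableNeg E] {μ : Measure E} [μ.IsAddLeftInvariant]
  [μ.IsNegInvariant] {J : E → ℝ}

theorem integrable_mul (hJ : IsProbabilityDensity μ J) {f : E → ℝ} {C : ℝ}
    (hf : AEStronglyMeasurable f μ) (hfC : ∀ y, |f y| ≤ C) (x : E) :
    Integrable (fun y => J (x - y) * f y) μ := by
  simpa only [mul_comm (J _)] using
    (hJ.integrable.comp_sub_left x).bdd_mul hf (Eventually.of_forall hfC)

theorem integral_mul_le (hJ : IsProbabilityDensity μ J) {f : E → ℝ} {x : E} {b : ℝ}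
    (hf : Integrable (fun y => J (x - y) * f y) μ) (hfb : ∀ y, f y ≤ b) :
    ∫ y, J (x - y) * f y ∂μ ≤ b :=
  calc ∫ y, J (x - y) * f y ∂μ ≤ ∫ y, J (x - y) * b ∂μ :=
        integral_mono hf ((hJ.integrable.comp_sub_left x).mul_const b)
          fun y => mul_le_mul_of_nonneg_left (hfb y) (hJ.nonneg _)
    _ = b := by
      rw [integral_mul_const, integral_sub_left_eq_self J μ x, hJ.integral_eq_one, one_mul]

theorem abs_integral_mul_le (hJ : IsProbabilityDensity μ J) {f : E → ℝ} {b : ℝ}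
    (hf : AEStronglyMeasurable f μ) (hfb : ∀ y, |f y| ≤ b) (x : E) :
    |∫ y, J (x - y) * f y ∂μ| ≤ b := by
  refine abs_le.2
    ⟨?_, hJ.integral_mul_le (hJ.integrable_mul hf hfb x) fun y => (abs_le.1 (hfb y)).2⟩
  have h := hJ.integral_mul_le (f := fun y => -f y)
    (hJ.integrable_mul hf.neg (by simpa only [Pi.neg_apply, abs_neg] using hfb) x)
    fun y => by linarith [(abs_le.1 (hfb y)).1]
  simp only [mul_neg, integral_neg] at h
  linarith

end IsProbabilityDensity

/-- `nonlocality μ J ρ' (fun y => u y t) x` is the paper's `g[u](x,t)`, with `ρ'` standing for the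
derivative of the recognition function. -/
noncomputable def nonlocality (μ : Measure E) (J : E → ℝ) (ρ' : ℝ → ℝ) (v : E → ℝ) (x : E) : ℝ :=
  ∫ y, J (x - y) * ρ' (v x - v y) ∂μ

section Nonlocality

variable {μ : Measure E} {J : E → ℝ} {ρ' : ℝ → ℝ} {v w : E → ℝ} {x : E} {b C : ℝ}

theorem nonlocality_add_right [MeasurableAdd E] [μ.IsAddLeftInvariant] (v : E → ℝ)
    (x h : E) :
    nonlocality μ J ρ' v (x + h) = nonlocality μ J ρ' (fun y => v (y + h)) x := by
  rw [nonlocality, ← integral_add_left_eq_self _ h, nonlocality]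
  simp only [add_sub_add_right_eq_sub, add_comm h]

theorem nonlocality_neg_comp_neg (v : E → ℝ) (x : E) :
    nonlocality μ J (fun z => -ρ' (-z)) (fun y => -v y) x = -nonlocality μ J ρ' v x := by
  simp only [nonlocality, neg_sub_neg, neg_sub, mul_neg, integral_neg]

variable [TopologicalSpace E] [OpensMeasurableSpace E] [MeasurableAdd E] [MeasurableNeg E]
  [μ.IsAddLeftInvariant] [μ.IsNegInvariant]

theorem IsProbabilityDensity.integrable_nonlocality (hJ : IsProbabilityDensity μ J)
    (hρ' : Continuous ρ') (hv : Continuous v) (hC : ∀ y, |ρ' (v x - v y)| ≤ C) :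
    Integrable (fun y => J (x - y) * ρ' (v x - v y)) μ :=
  hJ.integrable_mul (by fun_prop : Continuous fun y => ρ' (v x - v y)).aestronglyMeasurable hC x

theorem IsProbabilityDensity.nonlocality_le (hJ : IsProbabilityDensity μ J)
    (hρ' : Continuous ρ') (hv : Continuous v) (hC : ∀ y, |ρ' (v x - v y)| ≤ C)
    (hb : ∀ y, ρ' (v x - v y) ≤ b) : nonlocality μ J ρ' v x ≤ b :=
  hJ.integral_mul_le (hJ.integrable_nonlocality hρ' hv hC) hb

theorem IsProbabilityDensity.abs_nonlocality_le (hJ : IsProbabilityDensity μ J)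
    (hρ' : Continuous ρ') (hv : Continuous v) (hC : ∀ y, |ρ' (v x - v y)| ≤ C) :
    |nonlocality μ J ρ' v x| ≤ C :=
  hJ.abs_integral_mul_le (by fun_prop : Continuous fun y => ρ' (v x - v y)).aestronglyMeasurable
    hC x

theorem IsProbabilityDensity.abs_nonlocality_sub_le (hJ : IsProbabilityDensity μ J)
    (hρ' : Continuous ρ') (hv : Continuous v) (hw : Continuous w)
    (hCv : ∀ y, |ρ' (v x - v y)| ≤ C) (hCw : ∀ y, |ρ' (w x - w y)| ≤ C)
    (hb : ∀ y, |ρ' (v x - v y) - ρ' (w x - w y)| ≤ b) :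
    |nonlocality μ J ρ' v x - nonlocality μ J ρ' w x| ≤ b := by
  rw [nonlocality, nonlocality, ← integral_sub (hJ.integrable_nonlocality hρ' hv hCv)
    (hJ.integrable_nonlocality hρ' hw hCw)]
  simp only [← mul_sub]
  exact hJ.abs_integral_mul_le
    (by fun_prop : Continuous fun y => ρ' (v x - v y) - ρ' (w x - w y)).aestronglyMeasurable hb x

end Nonlocality

variable [TopologicalSpace E]

structure IsSolution (μ : Measure E) (J : E → ℝ) (ρ' : ℝ → ℝ) (u₀ : E → ℝ) (T : ℝ)
    (u : E → ℝ → ℝ) : Prop where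
  continuousOn : ContinuousOn (fun p : E × ℝ => u p.1 p.2) (univ ×ˢ Icc 0 T)
  bounded : ∃ B, ∀ x, ∀ t ∈ Icc 0 T, |u x t| ≤ B
  eq_add_integral : ∀ x, ∀ t ∈ Icc 0 T,
    u x t = u₀ x + ∫ s in (0 : ℝ)..t, nonlocality μ J ρ' (fun y => u y s) x

namespace IsSolution

variable {μ : Measure E} {J : E → ℝ} {ρ' : ℝ → ℝ} {u₀ v₀ : E → ℝ} {T : ℝ} {u v : E → ℝ → ℝ}
  {x : E} {s t₁ t₂ b p w B C L M : ℝ}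

theorem continuous_apply (hu : IsSolution μ J ρ' u₀ T u) (hs : s ∈ Icc 0 T) :
    Continuous fun y => u y s :=
  continuousOn_univ.1 <| hu.continuousOn.comp
    (by fun_prop : Continuous fun y : E => (y, s)).continuousOn fun _ _ => ⟨trivial, hs⟩

theorem continuousOn_apply (hu : IsSolution μ J ρ' u₀ T u) (x : E) :
    ContinuousOn (u x) (Icc 0 T) :=
  hu.continuousOn.comp (by fun_prop : Continuous fun s : ℝ => (x, s)).continuousOn
    fun _ hs => ⟨trivial, hs⟩

theorem apply_zero (hu : IsSolution μ J ρ' u₀ T u) (hT : 0 ≤ T) (x : E) : u x 0 = u₀ x := by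
  rw [hu.eq_add_integral x 0 ⟨le_rfl, hT⟩, intervalIntegral.integral_same, add_zero]

theorem comp_add_right [ContinuousAdd E] [MeasurableAdd E] [μ.IsAddLeftInvariant]
    (hu : IsSolution μ J ρ' u₀ T u) (h : E) :
    IsSolution μ J ρ' (fun x => u₀ (x + h)) T (fun x t => u (x + h) t) where
  continuousOn := hu.continuousOn.comp (f := fun p : E × ℝ => (p.1 + h, p.2))
    (by fun_prop : Continuous fun p : E × ℝ => (p.1 + h, p.2)).continuousOn
    fun _ hp => ⟨trivial, hp.2⟩
  bounded := let ⟨B, hB⟩ := hu.bounded; ⟨B, fun x => hB (x + h)⟩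
  eq_add_integral x t ht := by
    simpa only [nonlocality_add_right] using hu.eq_add_integral (x + h) t ht

theorem neg (hu : IsSolution μ J ρ' u₀ T u) :
    IsSolution μ J (fun z => -ρ' (-z)) (fun x => -u₀ x) T (fun x t => -u x t) where
  continuousOn := hu.continuousOn.neg
  bounded := let ⟨B, hB⟩ := hu.bounded; ⟨B, by simpa only [abs_neg] using hB⟩
  eq_add_integral x t ht := by
    simp only [nonlocality_neg_comp_neg, intervalIntegral.integral_neg]
    linarith [hu.eq_add_integral x t ht]

variable [OpensMeasurableSpace E] [MeasurableAdd E] [MeasurableNeg E] [μ.IsAddLeftInvariant]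
  [μ.IsNegInvariant]

theorem continuousOn_nonlocality (hJ : IsProbabilityDensity μ J) (hρ' : Continuous ρ')
    (hu : IsSolution μ J ρ' u₀ T u) (x : E) :
    ContinuousOn (fun s => nonlocality μ J ρ' (fun y => u y s) x) (Icc 0 T) := by
  obtain ⟨B, hB⟩ := hu.bounded
  obtain ⟨C, hC⟩ := hρ'.exists_abs_le_of_abs_le (2 * B)
  have hbound : ∀ s ∈ Icc 0 T, ∀ y, |ρ' (u x s - u y s)| ≤ C := fun s hs y =>
    hC _ (abs_sub_le_two_mul_of_abs_le (hB x s hs) (hB y s hs))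
  refine continuousOn_of_dominated (bound := fun y => J (x - y) * C)
    (fun s hs => (hJ.integrable_nonlocality hρ' (hu.continuous_apply hs) (hbound s hs)).1)
    (fun s hs => Eventually.of_forall fun y => ?_) ((hJ.integrable.comp_sub_left x).mul_const C)
    (Eventually.of_forall fun y => ?_)
  · rw [norm_mul, Real.norm_eq_abs, Real.norm_eq_abs, abs_of_nonneg (hJ.nonneg _)]
    exact mul_le_mul_of_nonneg_left (hbound s hs y) (hJ.nonneg _)
  · exact continuousOn_const.mul
      (hρ'.comp_continuousOn ((hu.continuousOn_apply x).sub (hu.continuousOn_apply y)))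

theorem intervalIntegrable_nonlocality (hJ : IsProbabilityDensity μ J) (hρ' : Continuous ρ')
    (hu : IsSolution μ J ρ' u₀ T u) (x : E) (h₁ : 0 ≤ t₁) (h₁₂ : t₁ ≤ t₂) (h₂ : t₂ ≤ T) :
    IntervalIntegrable (fun s => nonlocality μ J ρ' (fun y => u y s) x) volume t₁ t₂ :=
  ((hu.continuousOn_nonlocality hJ hρ' x).mono <| by
    rw [uIcc_of_le h₁₂]; exact Icc_subset_Icc h₁ h₂).intervalIntegrable

theorem sub_eq_integral (hJ : IsProbabilityDensity μ J) (hρ' : Continuous ρ')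
    (hu : IsSolution μ J ρ' u₀ T u) (x : E) (h₁ : 0 ≤ t₁) (h₁₂ : t₁ ≤ t₂) (h₂ : t₂ ≤ T) :
    u x t₂ - u x t₁ = ∫ s in t₁..t₂, nonlocality μ J ρ' (fun y => u y s) x := by
  rw [hu.eq_add_integral x t₂ ⟨h₁.trans h₁₂, h₂⟩, hu.eq_add_integral x t₁ ⟨h₁, h₁₂.trans h₂⟩,
    add_sub_add_left_eq_sub, intervalIntegral.integral_interval_sub_left
      (hu.intervalIntegrable_nonlocality hJ hρ' x le_rfl (h₁.trans h₁₂) h₂)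
      (hu.intervalIntegrable_nonlocality hJ hρ' x le_rfl h₁ (h₁₂.trans h₂))]

theorem le_add_mul_of_nonlocality_le (hJ : IsProbabilityDensity μ J) (hρ' : Continuous ρ')
    (hu : IsSolution μ J ρ' u₀ T u) (h₁ : 0 ≤ t₁) (h₁₂ : t₁ ≤ t₂) (h₂ : t₂ ≤ T)
    (hb : ∀ s ∈ Icc t₁ t₂, nonlocality μ J ρ' (fun y => u y s) x ≤ b) :
    u x t₂ ≤ u x t₁ + b * (t₂ - t₁) := by
  have h := intervalIntegral.integral_mono_on h₁₂
    (hu.intervalIntegrable_nonlocality hJ hρ' x h₁ h₁₂ h₂) intervalIntegrable_const hb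
  rw [intervalIntegral.integral_const, smul_eq_mul, ← hu.sub_eq_integral hJ hρ' x h₁ h₁₂ h₂] at h
  linarith

theorem abs_sub_le_mul (hJ : IsProbabilityDensity μ J) (hρ' : Continuous ρ')
    (hu : IsSolution μ J ρ' u₀ T u) (hB : ∀ x, ∀ t ∈ Icc 0 T, |u x t| ≤ B)
    (hC : ∀ z, |z| ≤ 2 * B → |ρ' z| ≤ C) (x : E) (h₁ : 0 ≤ t₁) (h₁₂ : t₁ ≤ t₂) (h₂ : t₂ ≤ T) :
    |u x t₂ - u x t₁| ≤ C * (t₂ - t₁) := by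
  rw [hu.sub_eq_integral hJ hρ' x h₁ h₁₂ h₂]
  refine abs_intervalIntegral_le_mul h₁₂ fun s hs => ?_
  have hs' : s ∈ Icc 0 T := ⟨h₁.trans hs.1, hs.2.trans h₂⟩
  exact hJ.abs_nonlocality_le hρ' (hu.continuous_apply hs') fun y =>
    hC _ (abs_sub_le_two_mul_of_abs_le (hB x s hs') (hB y s hs'))

theorem le_add_mul_sq_of_forall_le (hJ : IsProbabilityDensity μ J) (hρ' : Continuous ρ')
    (hu : IsSolution μ J ρ' u₀ T u) (hcoord : ∀ z, 0 ≤ z → ρ' z ≤ 0) (hL : 0 ≤ L)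
    (hlin : ∀ z, -(2 * B) ≤ z → z ≤ 0 → ρ' z ≤ L * -z)
    (hB : ∀ x, ∀ t ∈ Icc 0 T, |u x t| ≤ B) (hC : ∀ z, |z| ≤ 2 * B → |ρ' z| ≤ C)
    (h₁ : 0 ≤ t₁) (h₁₂ : t₁ ≤ t₂) (h₂ : t₂ ≤ T) (hLΔ : L * (t₂ - t₁) ≤ 1)
    (hp : ∀ y, u y t₁ ≤ p) (x : E) : u x t₂ ≤ p + 2 * L * C * (t₂ - t₁) ^ 2 := by
  have hIcc : ∀ s ∈ Icc t₁ t₂, s ∈ Icc 0 T := fun s hs => ⟨h₁.trans hs.1, hs.2.trans h₂⟩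
  have hC₀ : 0 ≤ C := (abs_nonneg _).trans (hC _ (abs_sub_le_two_mul_of_abs_le
    (hB x t₁ (hIcc t₁ ⟨le_rfl, h₁₂⟩)) (hB x t₁ (hIcc t₁ ⟨le_rfl, h₁₂⟩))))
  have hdrift : ∀ y, ∀ s ∈ Icc t₁ t₂, |u y s - u y t₁| ≤ C * (t₂ - t₁) := fun y s hs =>
    (hu.abs_sub_le_mul hJ hρ' hB hC y h₁ hs.1 (hIcc s hs).2).trans
      (mul_le_mul_of_nonneg_left (by linarith [hs.2]) hC₀)
  have hup : ∀ y, ∀ s ∈ Icc t₁ t₂, u y s ≤ p + C * (t₂ - t₁) := fun y s hs => by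
    linarith [(abs_le.1 (hdrift y s hs)).2, hp y]
  have hg : ∀ s ∈ Icc t₁ t₂,
      nonlocality μ J ρ' (fun y => u y s) x ≤ L * (p + 2 * C * (t₂ - t₁) - u x t₁) := by
    intro s hs
    have hdiff : ∀ y, |u x s - u y s| ≤ 2 * B := fun y =>
      abs_sub_le_two_mul_of_abs_le (hB x s (hIcc s hs)) (hB y s (hIcc s hs))
    refine (hJ.nonlocality_le hρ' (hu.continuous_apply (hIcc s hs)) (fun y => hC _ (hdiff y))
      fun y => le_mul_sub_of_coordination hcoord hlin hL (hup x s hs) (hup y s hs)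
        (abs_le.1 (hdiff y)).1).trans ?_
    exact mul_le_mul_of_nonneg_left (by linarith [(abs_le.1 (hdrift x s hs)).1]) hL
  have hx := hu.le_add_mul_of_nonlocality_le hJ hρ' h₁ h₁₂ h₂ hg
  -- the bound is `(1 - LΔ) u x t₁ + LΔ p + 2LCΔ²`, a convex combination as `LΔ ≤ 1`
  nlinarith [mul_nonneg (sub_nonneg.2 hLΔ) (sub_nonneg.2 (hp x))]

theorem le_of_forall_le (hJ : IsProbabilityDensity μ J) (hlip : LocallyLipschitz ρ')
    (hcoord : ∀ z, 0 ≤ z → ρ' z ≤ 0) (hu : IsSolution μ J ρ' u₀ T u) (hu₀ : ∀ x, u₀ x ≤ M) :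
    ∀ x, ∀ t ∈ Icc 0 T, u x t ≤ M := by
  intro x t ht
  have hT : 0 ≤ T := ht.1.trans ht.2
  obtain ⟨B, hB⟩ := hu.bounded
  obtain ⟨C, hC⟩ := hlip.continuous.exists_abs_le_of_abs_le (2 * B)
  have hC₀ : 0 ≤ C := (abs_nonneg _).trans (hC _ (abs_sub_le_two_mul_of_abs_le
    (hB x t ht) (hB x t ht)))
  obtain ⟨K, hK⟩ := LocallyLipschitzOn.exists_lipschitzOnWith_of_compact isCompact_Icc
    (hlip.locallyLipschitzOn (s := Icc (-(2 * B)) (2 * B)))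
  have hB₀ : 0 ≤ 2 * B := by linarith [(abs_nonneg _).trans (hB x t ht)]
  have hL : (0 : ℝ) < K + 1 := by positivity
  have hlin : ∀ z, -(2 * B) ≤ z → z ≤ 0 → ρ' z ≤ (K + 1) * -z := by
    intro z hz₁ hz₂
    have h := hK.dist_le_mul z ⟨hz₁, by linarith⟩ 0 ⟨by linarith, hB₀⟩
    rw [Real.dist_eq, Real.dist_eq, sub_zero, abs_of_nonpos hz₂] at h
    nlinarith [(abs_le.1 h).2, hcoord 0 le_rfl, K.2]
  set P : ℝ → ℝ := fun t => ⨆ y, u y t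
  have hbdd : ∀ t ∈ Icc 0 T, BddAbove (range fun y => u y t) := fun t ht =>
    ⟨B, by rintro _ ⟨y, rfl⟩; exact (le_abs_self _).trans (hB y t ht)⟩
  have hP : P t - P 0 ≤ Real.exp (0 * t) * (P 0 - P 0) := by
    refine le_exp_mul_mul_of_forall_le_one_add_mul (f := fun t => P t - P 0) le_rfl
      (by positivity : 0 ≤ 2 * (K + 1) * C) (one_div_pos.2 hL) (by simp)
      (fun t₁ t₂ h₁ h₁₂ h₂ hΔ => ?_) ht
    have hstep : P t₂ ≤ P t₁ + 2 * (K + 1) * C * (t₂ - t₁) ^ 2 :=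
      ciSup_le <| hu.le_add_mul_sq_of_forall_le hJ hlip.continuous hcoord hL.le hlin hB hC h₁ h₁₂
        h₂ ((le_div_iff₀' hL).1 hΔ) fun y => le_ciSup (hbdd t₁ ⟨h₁, h₁₂.trans h₂⟩) y
    simp only [zero_mul, add_zero, one_mul]
    linarith
  calc u x t ≤ P t := le_ciSup (hbdd t ht) x
    _ ≤ P 0 := by simpa using hP
    _ ≤ M := ciSup_le fun y => (hu.apply_zero hT y).symm ▸ hu₀ y

theorem abs_le_of_forall_abs_le (hJ : IsProbabilityDensity μ J) (hlip : LocallyLipschitz ρ')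
    (hcoord_pos : ∀ z, 0 ≤ z → ρ' z ≤ 0) (hcoord_neg : ∀ z, z ≤ 0 → 0 ≤ ρ' z)
    (hu : IsSolution μ J ρ' u₀ T u) (hu₀ : ∀ x, |u₀ x| ≤ M) :
    ∀ x, ∀ t ∈ Icc 0 T, |u x t| ≤ M := by
  intro x t ht
  have hle := hu.le_of_forall_le hJ hlip hcoord_pos (fun x => (abs_le.1 (hu₀ x)).2) x t ht
  have hge := hu.neg.le_of_forall_le hJ hlip.neg_comp_neg
    (fun z hz => neg_nonpos.2 (hcoord_neg _ (neg_nonpos.2 hz)))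
    (fun x => neg_le.1 (abs_le.1 (hu₀ x)).1) x t ht
  exact abs_le.2 ⟨by linarith, hle⟩

theorem abs_sub_le_one_add_mul (hJ : IsProbabilityDensity μ J) (hρ' : Continuous ρ')
    (hu : IsSolution μ J ρ' u₀ T u) (hv : IsSolution μ J ρ' v₀ T v)
    (huM : ∀ x, ∀ t ∈ Icc 0 T, |u x t| ≤ M) (hvM : ∀ x, ∀ t ∈ Icc 0 T, |v x t| ≤ M)
    (hLip : ∀ a b, |a| ≤ 2 * M → |b| ≤ 2 * M → |ρ' a - ρ' b| ≤ L * |a - b|) (hL : 0 ≤ L)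
    (hC : ∀ z, |z| ≤ 2 * M → |ρ' z| ≤ C) (h₁ : 0 ≤ t₁) (h₁₂ : t₁ ≤ t₂) (h₂ : t₂ ≤ T)
    (hw : ∀ y, |u y t₁ - v y t₁| ≤ w) (x : E) :
    |u x t₂ - v x t₂| ≤ (1 + 2 * L * (t₂ - t₁)) * w + 4 * L * C * (t₂ - t₁) ^ 2 := by
  have hIcc : ∀ s ∈ Icc t₁ t₂, s ∈ Icc 0 T := fun s hs => ⟨h₁.trans hs.1, hs.2.trans h₂⟩
  have hC₀ : 0 ≤ C := (abs_nonneg _).trans (hC _ (abs_sub_le_two_mul_of_abs_le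
    (huM x t₁ (hIcc t₁ ⟨le_rfl, h₁₂⟩)) (huM x t₁ (hIcc t₁ ⟨le_rfl, h₁₂⟩))))
  have hW : ∀ y, ∀ s ∈ Icc t₁ t₂, |u y s - v y s| ≤ w + 2 * C * (t₂ - t₁) := by
    intro y s hs
    have hu' := abs_le.1 (hu.abs_sub_le_mul hJ hρ' huM hC y h₁ hs.1 (hIcc s hs).2)
    have hv' := abs_le.1 (hv.abs_sub_le_mul hJ hρ' hvM hC y h₁ hs.1 (hIcc s hs).2)
    have hCs : C * (s - t₁) ≤ C * (t₂ - t₁) :=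
      mul_le_mul_of_nonneg_left (by linarith [hs.2]) hC₀
    have hw' := abs_le.1 (hw y)
    exact abs_le.2 ⟨by linarith, by linarith⟩
  have hg : ∀ s ∈ Icc t₁ t₂, |nonlocality μ J ρ' (fun y => u y s) x
      - nonlocality μ J ρ' (fun y => v y s) x| ≤ 2 * L * (w + 2 * C * (t₂ - t₁)) := by
    intro s hs
    have hs' := hIcc s hs
    have hdu : ∀ y, |u x s - u y s| ≤ 2 * M := fun y =>
      abs_sub_le_two_mul_of_abs_le (huM x s hs') (huM y s hs')
    have hdv : ∀ y, |v x s - v y s| ≤ 2 * M := fun y =>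
      abs_sub_le_two_mul_of_abs_le (hvM x s hs') (hvM y s hs')
    refine hJ.abs_nonlocality_sub_le hρ' (hu.continuous_apply hs') (hv.continuous_apply hs')
      (fun y => hC _ (hdu y)) (fun y => hC _ (hdv y))
      fun y => (hLip _ _ (hdu y) (hdv y)).trans ?_
    have hsplit : |(u x s - u y s) - (v x s - v y s)| ≤ |u x s - v x s| + |u y s - v y s| := by
      rw [show (u x s - u y s) - (v x s - v y s) = (u x s - v x s) - (u y s - v y s) by ring]
      exact abs_sub _ _
    nlinarith [hW x s hs, hW y s hs]
  have hinc : |(u x t₂ - v x t₂) - (u x t₁ - v x t₁)|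
      ≤ 2 * L * (w + 2 * C * (t₂ - t₁)) * (t₂ - t₁) := by
    rw [sub_sub_sub_comm, hu.sub_eq_integral hJ hρ' x h₁ h₁₂ h₂,
      hv.sub_eq_integral hJ hρ' x h₁ h₁₂ h₂, ← intervalIntegral.integral_sub
        (hu.intervalIntegrable_nonlocality hJ hρ' x h₁ h₁₂ h₂)
        (hv.intervalIntegrable_nonlocality hJ hρ' x h₁ h₁₂ h₂)]
    exact abs_intervalIntegral_le_mul h₁₂ hg
  linarith [abs_sub_abs_le_abs_sub (u x t₂ - v x t₂) (u x t₁ - v x t₁), hw x]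

theorem abs_sub_le_mul_exp (hJ : IsProbabilityDensity μ J) (hρ' : Continuous ρ')
    (hu : IsSolution μ J ρ' u₀ T u) (hv : IsSolution μ J ρ' v₀ T v)
    (huM : ∀ x, ∀ t ∈ Icc 0 T, |u x t| ≤ M) (hvM : ∀ x, ∀ t ∈ Icc 0 T, |v x t| ≤ M)
    (hLip : ∀ a b, |a| ≤ 2 * M → |b| ≤ 2 * M → |ρ' a - ρ' b| ≤ L * |a - b|) (hL : 0 ≤ L)
    {δ : ℝ} (hδ : ∀ x, |u₀ x - v₀ x| ≤ δ) :
    ∀ x, ∀ t ∈ Icc 0 T, |u x t - v x t| ≤ δ * Real.exp (2 * L * t) := by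
  intro x t ht
  have hT : 0 ≤ T := ht.1.trans ht.2
  obtain ⟨C, hC⟩ := hρ'.exists_abs_le_of_abs_le (2 * M)
  have hC₀ : 0 ≤ C := (abs_nonneg _).trans (hC _ (abs_sub_le_two_mul_of_abs_le
    (huM x t ht) (huM x t ht)))
  set W : ℝ → ℝ := fun t => ⨆ y, |u y t - v y t|
  have hbdd : ∀ t ∈ Icc 0 T, BddAbove (range fun y => |u y t - v y t|) := fun t ht =>
    ⟨2 * M, by rintro _ ⟨y, rfl⟩; exact abs_sub_le_two_mul_of_abs_le (huM y t ht) (hvM y t ht)⟩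
  have hW : W t ≤ Real.exp (2 * L * t) * W 0 :=
    le_exp_mul_mul_of_forall_le_one_add_mul (by positivity) (by positivity : 0 ≤ 4 * L * C)
      one_pos ((abs_nonneg _).trans (le_ciSup (hbdd 0 ⟨le_rfl, hT⟩) x))
      (fun t₁ t₂ h₁ h₁₂ h₂ _ => ciSup_le <| hu.abs_sub_le_one_add_mul hJ hρ' hv huM hvM hLip hL
        hC h₁ h₁₂ h₂ fun y => le_ciSup (hbdd t₁ ⟨h₁, h₁₂.trans h₂⟩) y) ht
  have hW₀ : W 0 ≤ δ := ciSup_le fun y => by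
    simpa only [hu.apply_zero hT, hv.apply_zero hT] using hδ y
  calc |u x t - v x t| ≤ W t := le_ciSup (hbdd t ht) x
    _ ≤ Real.exp (2 * L * t) * W 0 := hW
    _ ≤ δ * Real.exp (2 * L * t) := by rw [mul_comm]; gcongr

end IsSolution

end

theorem statement8_general
    (n : ℕ)
    -- translation invariant kernel `J`, nonnegative, integrable, normalized:
    (J : EuclideanSpace ℝ (Fin n) → ℝ)
    (hJnonneg : ∀ z, 0 ≤ J z) (hJint : Integrable J) (hJnorm : (∫ z, J z) = 1)
    -- `ρ` is a recognition function satisfying the coordination condition: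
    (ρ : ℝ → ℝ)
    (hρ'lip : ∀ R : ℝ, 0 < R → ∃ L : ℝ, ∀ a b : ℝ, |a| ≤ R → |b| ≤ R →
        |deriv ρ a - deriv ρ b| ≤ L * |a - b|)
    (hcoord_pos : ∀ z : ℝ, 0 ≤ z → deriv ρ z ≤ 0)
    (hcoord_neg : ∀ z : ℝ, z ≤ 0 → 0 ≤ deriv ρ z)
    -- `u₀` bounded and Lipschitz with constant `L₀`; `M` bounds `|u₀|`:
    (u₀ : EuclideanSpace ℝ (Fin n) → ℝ)
    (L₀ : ℝ) (hu₀lip : ∀ x y, |u₀ x - u₀ y| ≤ L₀ * dist x y)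
    (M : ℝ) (hu₀bd : ∀ x, |u₀ x| ≤ M)
    -- `L_ρ` is a Lipschitz constant for `ρ'` on `[−2M, 2M]`:
    (L_ρ : ℝ) (hLρ : ∀ a b : ℝ, |a| ≤ 2 * M → |b| ≤ 2 * M →
        |deriv ρ a - deriv ρ b| ≤ L_ρ * |a - b|)
    -- `u` solves the IVP on `ℝⁿ × [0,T]`:
    (T : ℝ)
    (u : EuclideanSpace ℝ (Fin n) → ℝ → ℝ)
    (hucont : ContinuousOn (fun p : EuclideanSpace ℝ (Fin n) × ℝ => u p.1 p.2)
        (univ ×ˢ Icc 0 T))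
    (hubd : ∃ Mu : ℝ, ∀ x, ∀ t ∈ Icc (0:ℝ) T, |u x t| ≤ Mu)
    (hueq : ∀ x, ∀ t ∈ Icc (0:ℝ) T,
        u x t = u₀ x + ∫ s in (0:ℝ)..t, ∫ y, J (x - y) * deriv ρ (u x s - u y s)) :
    ∀ x h : EuclideanSpace ℝ (Fin n), ∀ t ∈ Icc (0:ℝ) T,
      |u (x + h) t - u x t| ≤ ‖h‖ * L₀ * Real.exp (2 * L_ρ * t) := by
  intro x h t ht
  have hJ : IsProbabilityDensity volume J := ⟨hJnonneg, hJint, hJnorm⟩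
  have hlip : LocallyLipschitz (deriv ρ) := locallyLipschitz_of_forall_abs_sub_le hρ'lip
  have hu : IsSolution volume J (deriv ρ) u₀ T u := ⟨hucont, hubd, hueq⟩
  have huM := hu.abs_le_of_forall_abs_le hJ hlip hcoord_pos hcoord_neg hu₀bd
  have hu₀h : ∀ y, |u₀ (y + h) - u₀ y| ≤ ‖h‖ * L₀ := fun y => by
    simpa [dist_eq_norm, mul_comm] using hu₀lip (y + h) y
  -- if `M ≤ 0` then `u ≡ 0`, while `L_ρ` may be negative
  rcases le_or_gt M 0 with hM | hM
  · have hdiff := abs_sub_le_two_mul_of_abs_le (huM (x + h) t ht) (huM x t ht)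
    have hrate := (abs_nonneg _).trans (hu₀h x)
    nlinarith [Real.exp_pos (2 * L_ρ * t)]
  · have hLρ₀ : 0 ≤ L_ρ := by
      have h2M := (abs_nonneg _).trans (hLρ (2 * M) 0 (by rw [abs_of_pos (by linarith)])
        (by rw [abs_zero]; linarith))
      rw [sub_zero, abs_of_pos (by linarith)] at h2M
      nlinarith
    exact (hu.comp_add_right h).abs_sub_le_mul_exp hJ hlip.continuous hu (fun y => huM (y + h))
      huM hLρ hLρ₀ hu₀h x t ht

/-- Regularity for the Cauchy problem with a translation invariant kernel
`K(x,y) = J(x−y)`, `J ≥ 0`, `∫ J = 1`.  If `ρ` satisfies the coordination condition, `u₀` is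
bounded and `L₀`-Lipschitz, `L_ρ` is a Lipschitz constant for `ρ'` on `[−2 sup|u₀|, 2 sup|u₀|]`,
and `u` solves the IVP on `ℝⁿ × [0,T]`, then
`|u(x+h,t) − u(x,t)| ≤ |h| L₀ e^{2 L_ρ t}` for all `x, h ∈ ℝⁿ`, `t ∈ [0,T]`. -/
theorem statement8
    (n : ℕ)
    -- translation invariant kernel `J`, nonnegative, integrable, normalized:
    (J : EuclideanSpace ℝ (Fin n) → ℝ)
    (hJnonneg : ∀ z, 0 ≤ J z) (hJint : Integrable J) (hJnorm : (∫ z, J z) = 1)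
    -- `ρ` is a recognition function satisfying the coordination condition:
    (ρ : ℝ → ℝ) (hρ : Differentiable ℝ ρ)
    (hρ'lip : ∀ R : ℝ, 0 < R → ∃ L : ℝ, ∀ a b : ℝ, |a| ≤ R → |b| ≤ R →
        |deriv ρ a - deriv ρ b| ≤ L * |a - b|)
    (hcoord_pos : ∀ z : ℝ, 0 ≤ z → deriv ρ z ≤ 0)
    (hcoord_neg : ∀ z : ℝ, z ≤ 0 → 0 ≤ deriv ρ z)
    -- `u₀` bounded and Lipschitz with constant `L₀`; `M` bounds `|u₀|`:
    (u₀ : EuclideanSpace ℝ (Fin n) → ℝ)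
    (L₀ : ℝ) (hu₀lip : ∀ x y, |u₀ x - u₀ y| ≤ L₀ * dist x y)
    (M : ℝ) (hu₀bd : ∀ x, |u₀ x| ≤ M)
    -- `L_ρ` is a Lipschitz constant for `ρ'` on `[−2M, 2M]`:
    (L_ρ : ℝ) (hLρ : ∀ a b : ℝ, |a| ≤ 2 * M → |b| ≤ 2 * M →
        |deriv ρ a - deriv ρ b| ≤ L_ρ * |a - b|)
    -- `u` solves the IVP on `ℝⁿ × [0,T]`:
    (T : ℝ) (hT : 0 < T)
    (u : EuclideanSpace ℝ (Fin n) → ℝ → ℝ)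
    (hucont : ContinuousOn (fun p : EuclideanSpace ℝ (Fin n) × ℝ => u p.1 p.2)
        (univ ×ˢ Icc 0 T))
    (hubd : ∃ Mu : ℝ, ∀ x, ∀ t ∈ Icc (0:ℝ) T, |u x t| ≤ Mu)
    (hueq : ∀ x, ∀ t ∈ Icc (0:ℝ) T,
        u x t = u₀ x + ∫ s in (0:ℝ)..t, ∫ y, J (x - y) * deriv ρ (u x s - u y s)) :
    ∀ x h : EuclideanSpace ℝ (Fin n), ∀ t ∈ Icc (0:ℝ) T,
      |u (x + h) t - u x t| ≤ ‖h‖ * L₀ * Real.exp (2 * L_ρ * t) :=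
  statement8_general n J hJnonneg hJint hJnorm ρ hρ'lip hcoord_pos hcoord_neg u₀ L₀ hu₀lip M hu₀bd
    L_ρ hLρ T u hucont hubd hueq
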